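/- If each rebuild of a subtree that contained m keys at its last rebuild is triggered only after at least ⌈m/4⌉ updates to that subtree, and the cost of rebuilding a subtree with k keys is O(k), then over any sequence of n insertions and deletions into an initially empty tree of depth at most D, the total rebuilding cost is O(n · D). -/

import Mathlib

/-- Amortization of partial rebuilding: if each rebuild `r` of a subtree that contained `m r`
keys at its last rebuild is triggered only after at least `⌈m r / 4⌉` updates to that subtree
(the set `S r` of updates charged to it), the number of keys `k r` at rebuild time is at most
`m r` plus the number of those updates, the cost of rebuilding a subtree with `k` keys is at
most `c * k`, and each of the `n` updates is charged to at most `D` rebuilds (one per ancestor,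
`D` bounding the tree depth), then the total rebuilding cost is at most `5 * c * D * n`,
i.e. `O(n · D)`. -/
theorem rebuild_amortized_cost {ι : Type*} (n D c : ℕ) (R : Finset ι)
    (S : ι → Finset (Fin n)) (m k cost : ι → ℕ)
    (htrigger : ∀ r ∈ R, ⌈(m r : ℚ) / 4⌉ ≤ ((S r).card : ℤ))
    (hkeys : ∀ r ∈ R, k r ≤ m r + (S r).card)
    (hcost : ∀ r ∈ R, cost r ≤ c * k r)
    (hdepth : ∀ u : Fin n, (R.filter fun r => u ∈ S r).card ≤ D) :
    ∑ r ∈ R, cost r ≤ 5 * c * D * n := by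
  have hm : ∀ r ∈ R, m r ≤ 4 * (S r).card := by
    intro r hr
    have h1 : (m r : ℚ) / 4 ≤ ((S r).card : ℚ) := by
      calc (m r : ℚ) / 4 ≤ (⌈(m r : ℚ) / 4⌉ : ℚ) := Int.le_ceil _
        _ ≤ ((S r).card : ℚ) := by exact_mod_cast htrigger r hr
    have : (m r : ℚ) ≤ 4 * ((S r).card : ℚ) := by linarith
    exact_mod_cast this
  have hstep : ∑ r ∈ R, cost r ≤ ∑ r ∈ R, 5 * c * (S r).card := by
    apply Finset.sum_le_sum
    intro r hr
    calc cost r ≤ c * k r := hcost r hr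
      _ ≤ c * (m r + (S r).card) := Nat.mul_le_mul_left _ (hkeys r hr)
      _ ≤ c * (4 * (S r).card + (S r).card) :=
          Nat.mul_le_mul_left _ (Nat.add_le_add_right (hm r hr) _)
      _ = 5 * c * (S r).card := by ring
  have hswap : ∑ r ∈ R, (S r).card ≤ D * n := by
    have : ∑ r ∈ R, (S r).card
        = ∑ u : Fin n, (R.filter fun r => u ∈ S r).card := by
      have h1 : ∑ r ∈ R, (S r).card
          = ∑ r ∈ R, ∑ u : Fin n, (if u ∈ S r then 1 else 0) := by
        refine Finset.sum_congr rfl fun r _ => ?_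
        simp [Finset.sum_boole]
      rw [h1, Finset.sum_comm]
      refine Finset.sum_congr rfl fun u _ => ?_
      simp [Finset.sum_boole]
    rw [this]
    calc ∑ u : Fin n, (R.filter fun r => u ∈ S r).card
        ≤ ∑ _u : Fin n, D := Finset.sum_le_sum fun u _ => hdepth u
      _ = n * D := by simp [Finset.sum_const, Nat.mul_comm]
      _ = D * n := Nat.mul_comm _ _
  calc ∑ r ∈ R, cost r ≤ ∑ r ∈ R, 5 * c * (S r).card := hstep
    _ = 5 * c * ∑ r ∈ R, (S r).card := by rw [Finset.mul_sum]
    _ ≤ 5 * c * (D * n) := Nat.mul_le_mul_left _ hswap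
    _ = 5 * c * D * n := by ring
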